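/- arXiv:1703.01649 — 8 statements merged into one kernel-verified Lean document; each statement's English description precedes it below -/
import Mathlib

section
/- In the counterexample instance with n agents, 2n−1 items, entitlements e_i = ε for i < n and e_n = 1−(n−1)ε, where agents a_1,…,a_{n−1} value item b_j at ε for j ≤ n−1, at 1−(n−1)ε for j = n, and 0 for j > n, and agent a_n values items b_1,…,b_n at (1−(n−1)ε)/n each and items b_{n+1},…,b_{2n−1} at ε each, we have WMMS_i = ε for all i < n and WMMS_n = 1−(n−1)ε, provided 0 < ε < 1/n². -/
open Finset

/-- The weighted maxmin share of agent `i`. -/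
noncomputable def WMMS {n m : ℕ} (e : Fin n → ℝ) (v : Fin m → ℝ) (i : Fin n) : ℝ :=
  ⨆ f : Fin m → Fin n, ⨅ j : Fin n,
    (∑ b ∈ Finset.univ.filter (fun b => f b = j), v b) * (e i / e j)

lemma sum_fin_lt' (m t : ℕ) (ht : t ≤ m) (c : ℝ) :
    (∑ b : Fin m, if (b : ℕ) < t then c else 0) = t * c := by
  rw [Fin.sum_univ_eq_sum_range (fun k => if k < t then c else 0) m, ← Finset.sum_filter]
  have h : (Finset.range m).filter (fun k => k < t) = Finset.range t := by
    ext k; simp only [Finset.mem_filter, Finset.mem_range]; omega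
  rw [h, Finset.sum_const, Finset.card_range, nsmul_eq_mul]

lemma sum_fin_eq' (m t : ℕ) (ht : t < m) (c : ℝ) :
    (∑ b : Fin m, if (b : ℕ) = t then c else 0) = c := by
  rw [Fin.sum_univ_eq_sum_range (fun k => if k = t then c else 0) m]
  rw [Finset.sum_ite_eq' (Finset.range m) t (fun _ => c)]
  simp [ht]

/-- In the counterexample instance with `n` agents and `2n−1` items,
`WMMS_i = ε` for the first `n−1` agents and `WMMS_n = 1−(n−1)ε`. -/
theorem stmt_3 (n : ℕ) (hn : 2 ≤ n) (ε : ℝ) (hε0 : 0 < ε) (hε : ε < 1 / (n : ℝ) ^ 2)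
    (e : Fin n → ℝ)
    (he : ∀ i : Fin n, e i = if (i : ℕ) < n - 1 then ε else 1 - ((n : ℝ) - 1) * ε)
    (V : Fin n → Fin (2 * n - 1) → ℝ)
    (hV1 : ∀ i : Fin n, (i : ℕ) < n - 1 → ∀ j : Fin (2 * n - 1),
      V i j = if (j : ℕ) < n - 1 then ε
              else if (j : ℕ) = n - 1 then 1 - ((n : ℝ) - 1) * ε else 0)
    (hVn : ∀ i : Fin n, (i : ℕ) = n - 1 → ∀ j : Fin (2 * n - 1),
      V i j = if (j : ℕ) < n then (1 - ((n : ℝ) - 1) * ε) / n else ε) :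
    ∀ i : Fin n,
      WMMS e (V i) i = if (i : ℕ) < n - 1 then ε else 1 - ((n : ℝ) - 1) * ε := by
  intro i
  haveI : Nonempty (Fin n) := ⟨i⟩
  set w : ℝ := 1 - ((n : ℝ) - 1) * ε with hwdef
  have hn1 : 1 ≤ n := by omega
  have hnR : (2 : ℝ) ≤ (n : ℝ) := by exact_mod_cast hn
  have hn2 : (0 : ℝ) < (n : ℝ) ^ 2 := by positivity
  have hεn : ε * (n : ℝ) ^ 2 < 1 := by
    have := (lt_div_iff₀ hn2).mp hε; linarith
  have hwpos : 0 < w := by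
    rw [hwdef]; nlinarith
  have hepos : ∀ j, 0 < e j := by
    intro j; rw [he j]; split_ifs; exacts [hε0, hwpos]
  have hcast : ((n - 1 : ℕ) : ℝ) = (n : ℝ) - 1 := by
    push_cast [Nat.cast_sub hn1]; ring
  have hesum : ∑ j, e j = 1 := by
    have hpt : ∀ j : Fin n, e j =
        (if (j : ℕ) < n - 1 then ε else 0) + (if (j : ℕ) = n - 1 then w else 0) := by
      intro j
      have hj := j.isLt
      rw [he j]
      split_ifs <;> first | (exfalso; omega) | ring
    rw [Finset.sum_congr rfl (fun j _ => hpt j), Finset.sum_add_distrib,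
      sum_fin_lt' n (n - 1) (by omega) ε, sum_fin_eq' n (n - 1) (by omega) w, hcast, hwdef]
    ring
  have hfibtot : ∀ f : Fin (2 * n - 1) → Fin n,
      (∑ j, ∑ b ∈ Finset.univ.filter (fun b => f b = j), V i b) = ∑ b, V i b :=
    fun f => Finset.sum_fiberwise _ f (V i)
  suffices hF : ∃ f : Fin (2 * n - 1) → Fin n,
      ∀ j, (∑ b ∈ Finset.univ.filter (fun b => f b = j), V i b) = e j by
    obtain ⟨f₀, hf₀⟩ := hF
    have hVsum : ∑ b, V i b = 1 := by
      rw [← hfibtot f₀, Finset.sum_congr rfl (fun j _ => hf₀ j), hesum]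
    have hub : WMMS e (V i) i ≤ e i := by
      unfold WMMS
      apply ciSup_le
      intro f
      by_contra hcon
      push_neg at hcon
      have hterm : ∀ j, e j < ∑ b ∈ Finset.univ.filter (fun b => f b = j), V i b := by
        intro j
        have h1 : e i < (∑ b ∈ Finset.univ.filter (fun b => f b = j), V i b) * (e i / e j) :=
          lt_of_lt_of_le hcon (ciInf_le (Set.Finite.bddBelow (Set.finite_range _)) j)
        have h2 := hepos j
        have h3 := hepos i
        rw [← mul_div_assoc, lt_div_iff₀ h2] at h1
        nlinarith
      have habs : (1 : ℝ) < 1 := by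
        calc (1 : ℝ) = ∑ j, e j := hesum.symm
          _ < ∑ j, ∑ b ∈ Finset.univ.filter (fun b => f b = j), V i b :=
              Finset.sum_lt_sum_of_nonempty ⟨i, mem_univ i⟩ (fun j _ => hterm j)
          _ = 1 := by rw [hfibtot f, hVsum]
      exact absurd habs (lt_irrefl 1)
    have hlb : e i ≤ WMMS e (V i) i := by
      unfold WMMS
      have hpt : ∀ j : Fin n,
          (∑ b ∈ Finset.univ.filter (fun b => f₀ b = j), V i b) * (e i / e j) = e i := by
        intro j
        rw [hf₀ j, mul_div_assoc', mul_comm, mul_div_assoc,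
          div_self (ne_of_gt (hepos j)), mul_one]
      calc e i = ⨅ j : Fin n,
            (∑ b ∈ Finset.univ.filter (fun b => f₀ b = j), V i b) * (e i / e j) := by
            simp only [hpt]; exact (ciInf_const).symm
        _ ≤ _ := le_ciSup (Set.Finite.bddAbove (Set.finite_range (fun f : Fin (2 * n - 1) → Fin n =>
              ⨅ j : Fin n, (∑ b ∈ Finset.univ.filter (fun b => f b = j), V i b) * (e i / e j)))) f₀
    rw [le_antisymm hub hlb, he i]
  by_cases hi : (i : ℕ) < n - 1
  · -- first n-1 agents
    refine ⟨fun b => ⟨min (b : ℕ) (n - 1), by omega⟩, fun j => ?_⟩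
    have hj := j.isLt
    rw [Finset.sum_filter]
    refine (Finset.sum_congr rfl fun b _ => ?_).trans
      (sum_fin_eq' (2 * n - 1) (j : ℕ) (by omega) (e j))
    have hb := b.isLt
    rw [hV1 i hi b, he j]
    simp only [Fin.ext_iff]
    split_ifs <;> first | rfl | (exfalso; omega)
  · have hi' : (i : ℕ) = n - 1 := by have := i.isLt; omega
    refine ⟨fun b => ⟨if (b : ℕ) < n then n - 1 else (b : ℕ) - n,
      by have := b.isLt; split_ifs <;> omega⟩, fun j => ?_⟩
    have hj := j.isLt
    rw [Finset.sum_filter]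
    by_cases hj1 : (j : ℕ) = n - 1
    · have hmid : (∑ b : Fin (2 * n - 1), if (b : ℕ) < n then w / n else 0) = e j := by
        rw [sum_fin_lt' (2 * n - 1) n (by omega) (w / n), he j, if_neg (by omega),
          mul_div_assoc', mul_comm, mul_div_assoc,
          div_self (ne_of_gt (by exact_mod_cast (by omega : 0 < n))), mul_one]
      refine Eq.trans (Finset.sum_congr rfl fun b _ => ?_) hmid
      have hb := b.isLt
      rw [hVn i hi' b]
      simp only [Fin.ext_iff]
      split_ifs <;> first | rfl | (exfalso; omega)
    · rw [he j, if_pos (by omega)]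
      refine (Finset.sum_congr rfl fun b _ => ?_).trans
        (sum_fin_eq' (2 * n - 1) (n + (j : ℕ)) (by omega) ε)
      have hb := b.isLt
      rw [hVn i hi' b]
      simp only [Fin.ext_iff]
      split_ifs <;> first | rfl | (exfalso; omega)
end

section
/- In the counterexample instance (n agents, 2n−1 items as specified), every allocation that gives each agent a positive fraction of his WMMS gives agent a_n a bundle of value at most 1/n + nε, hence no allocation is better than (1/n + nε)/(1−(n−1)ε)-WMMS; in particular, for every δ > 0 there exists ε > 0 such that no allocation in this instance is (1/n + δ)-WMMS. -/
open Finset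

/-- Entitlements of the counterexample instance: `e_i = ε` for `i < n`,
`e_n = 1 − (n−1)ε` (0-based: the last agent has index `n−1`). -/
noncomputable def ent (n : ℕ) (ε : ℝ) (i : Fin n) : ℝ :=
  if (i : ℕ) < n - 1 then ε else 1 - ((n : ℝ) - 1) * ε

/-- Valuations of the counterexample instance with `2n−1` items. -/
noncomputable def val (n : ℕ) (ε : ℝ) (i : Fin n) (j : Fin (2 * n - 1)) : ℝ :=
  if (i : ℕ) < n - 1 then
    (if (j : ℕ) < n - 1 then ε
     else if (j : ℕ) = n - 1 then 1 - ((n : ℝ) - 1) * ε else 0)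
  else (if (j : ℕ) < n then (1 - ((n : ℝ) - 1) * ε) / n else ε)

/-- The weighted maxmin shares in the counterexample:
`WMMS_i = ε` for `i < n` and `WMMS_n = 1 − (n−1)ε`. -/
noncomputable def wmmsVal (n : ℕ) (ε : ℝ) (i : Fin n) : ℝ :=
  if (i : ℕ) < n - 1 then ε else 1 - ((n : ℝ) - 1) * ε

/-- The value of agent `i`'s bundle under the allocation `f` (an allocation is
an ordered partition, encoded as an assignment of items to agents). -/
noncomputable def bundleVal (n : ℕ) (ε : ℝ) (f : Fin (2 * n - 1) → Fin n)
    (i : Fin n) : ℝ :=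
  ∑ b ∈ Finset.univ.filter (fun b => f b = i), val n ε i b

/-!
Each of the first `n − 1` agents values only the first `n` items positively, so an allocation
giving all of them positive value hands each of them one of the first `n` items. The last agent
then holds at most one of those items, worth at most `1/n` to him, and, as the others hold at
least `n − 1` items, at most `n` items in total, each worth at most `ε` beyond that. Finally, the ratio `(1/n + nε)/(1 − (n−1)ε)` tends to
`1/n` as `ε → 0⁺`.
-/

open Filter Topology

theorem card_fiber_add_card_sub_one_le {α β : Type*} [Fintype β] [DecidableEq β]
    (f : α → β) (s : Finset α) (L : β) (hhit : ∀ i ≠ L, ∃ b ∈ s, f b = i) :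
    #{b ∈ s | f b = L} + (Fintype.card β - 1) ≤ #s := by
  have hfib : #s = ∑ i, #{b ∈ s | f b = i} :=
    card_eq_sum_card_fiberwise fun b _ => mem_coe.2 (mem_univ (f b))
  have hothers : #(univ.erase L) ≤ ∑ i ∈ univ.erase L, #{b ∈ s | f b = i} := by
    rw [card_eq_sum_ones]
    refine sum_le_sum fun i hi => card_pos.2 ?_
    obtain ⟨b, hb, rfl⟩ := hhit i (ne_of_mem_erase hi)
    exact ⟨b, mem_filter.2 ⟨hb, rfl⟩⟩
  rw [card_erase_of_mem (mem_univ L), card_univ] at hothers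
  rw [hfib, ← add_sum_erase _ _ (mem_univ L)]
  omega

section Counterexample

variable {n : ℕ} {ε : ℝ}

theorem lt_of_val_pos {i : Fin n} {b : Fin (2 * n - 1)} (hi : (i : ℕ) < n - 1)
    (hb : 0 < val n ε i b) : (b : ℕ) < n := by
  by_contra hbn
  simp only [_root_.val, if_pos hi, if_neg (show ¬(b : ℕ) < n - 1 by omega),
    if_neg (show (b : ℕ) ≠ n - 1 by omega), lt_irrefl] at hb

theorem exists_lt_of_bundleVal_pos {f : Fin (2 * n - 1) → Fin n} {i : Fin n}
    (hi : (i : ℕ) < n - 1) (hpos : 0 < bundleVal n ε f i) :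
    ∃ b ∈ ({b | (b : ℕ) < n} : Finset (Fin (2 * n - 1))), f b = i := by
  obtain ⟨b, hb, hvb⟩ := exists_lt_of_sum_lt (s := univ.filter (fun b => f b = i))
    (f := fun _ => (0 : ℝ)) (by simpa [bundleVal] using hpos)
  exact ⟨b, mem_filter.2 ⟨mem_univ b, lt_of_val_pos hi hvb⟩, (mem_filter.1 hb).2⟩

theorem val_last_le (hn : 0 < n) (hε : 0 ≤ ε) (b : Fin (2 * n - 1)) :
    val n ε ⟨n - 1, by omega⟩ b ≤ ε + if (b : ℕ) < n then 1 / (n : ℝ) else 0 := by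
  have hn' : (0 : ℝ) < n := by exact_mod_cast hn
  have hshare : (1 - ((n : ℝ) - 1) * ε) / n ≤ 1 / n := by
    gcongr
    nlinarith [show (1 : ℝ) ≤ n by exact_mod_cast hn]
  simp only [_root_.val, lt_irrefl, if_false]
  split_ifs <;> linarith

theorem bundleVal_last_le (hn : 0 < n) (hε : 0 ≤ ε) {f : Fin (2 * n - 1) → Fin n}
    (hpos : ∀ i, 0 < bundleVal n ε f i) :
    bundleVal n ε f ⟨n - 1, by omega⟩ ≤ 1 / (n : ℝ) + n * ε := by
  set L : Fin n := ⟨n - 1, by omega⟩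
  set B : Finset (Fin (2 * n - 1)) := {b | f b = L}
  have hhit : ∀ i ≠ L, ∃ b ∈ ({b | (b : ℕ) < n} : Finset (Fin (2 * n - 1))), f b = i := by
    intro i hi
    have hiL : (i : ℕ) ≠ n - 1 := Fin.val_ne_of_ne hi
    exact exists_lt_of_bundleVal_pos (by omega) (hpos i)
  have hbig : #{b ∈ B | b.val < n} ≤ 1 := by
    have := card_fiber_add_card_sub_one_le f _ L hhit
    rw [Fin.card_filter_val_lt, Fintype.card_fin, filter_filter] at this
    have heq : {b ∈ B | b.val < n} =
        ({b | b.val < n ∧ f b = L} : Finset (Fin (2 * n - 1))) := by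
      simp only [B, filter_filter, and_comm]
    rw [heq]
    omega
  have hall : #B ≤ n := by
    have : #B + (n - 1) ≤ 2 * n - 1 := by
      simpa using card_fiber_add_card_sub_one_le f univ L
        fun i hi => (hhit i hi).imp fun b hb => ⟨mem_univ b, hb.2⟩
    omega
  calc bundleVal n ε f L
      ≤ ∑ b ∈ B, (ε + if (b : ℕ) < n then 1 / (n : ℝ) else 0) :=
        sum_le_sum fun b _ => val_last_le hn hε b
    _ = #B * ε + #{b ∈ B | b.val < n} * (1 / (n : ℝ)) := by
        rw [sum_add_distrib, ← sum_filter, sum_const, sum_const, nsmul_eq_mul, nsmul_eq_mul]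
    _ ≤ n * ε + 1 * (1 / (n : ℝ)) := by
        have hall' : (#B : ℝ) ≤ n := by exact_mod_cast hall
        have hbig' : (#{b ∈ B | b.val < n} : ℝ) ≤ 1 := by exact_mod_cast hbig
        gcongr
    _ = 1 / (n : ℝ) + n * ε := by ring

theorem one_sub_pred_mul_pos (hn : 0 < n) (hε : 0 ≤ ε) (hε2 : ε < 1 / (n : ℝ) ^ 2) :
    0 < 1 - ((n : ℝ) - 1) * ε := by
  have hn' : (1 : ℝ) ≤ n := by exact_mod_cast hn
  have : ε * (n : ℝ) ^ 2 < 1 := (lt_div_iff₀ (by positivity)).1 hε2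
  nlinarith

theorem wmmsVal_pos (hε : 0 < ε) (hlast : 0 < 1 - ((n : ℝ) - 1) * ε) (i : Fin n) :
    0 < wmmsVal n ε i := by
  unfold wmmsVal
  split_ifs <;> assumption

def IsApproxWMMS (n : ℕ) (ε α : ℝ) (f : Fin (2 * n - 1) → Fin n) : Prop :=
  ∀ i, α * wmmsVal n ε i ≤ bundleVal n ε f i

theorem not_isApproxWMMS (hn : 0 < n) (hε : 0 < ε) (hε2 : ε < 1 / (n : ℝ) ^ 2) {α : ℝ}
    (hα : (1 / (n : ℝ) + n * ε) / (1 - ((n : ℝ) - 1) * ε) < α)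
    (f : Fin (2 * n - 1) → Fin n) :
    ¬ IsApproxWMMS n ε α f := by
  intro h
  have hlast := one_sub_pred_mul_pos hn hε.le hε2
  have hα0 : 0 < α := lt_of_le_of_lt (by positivity) hα
  have hbound := (h ⟨n - 1, by omega⟩).trans <| bundleVal_last_le hn hε.le
    fun i => (mul_pos hα0 (wmmsVal_pos hε hlast i)).trans_le (h i)
  simp only [wmmsVal, lt_irrefl, if_false] at hbound
  rw [div_lt_iff₀ hlast] at hα
  linarith

theorem exists_forall_not_isApproxWMMS (hn : 0 < n) {δ : ℝ} (hδ : 0 < δ) :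
    ∃ ε > 0, ∀ f, ¬ IsApproxWMMS n ε (1 / (n : ℝ) + δ) f := by
  set ratio : ℝ → ℝ := fun ε => (1 / (n : ℝ) + n * ε) / (1 - ((n : ℝ) - 1) * ε)
  have hratio : Tendsto ratio (𝓝[>] 0) (𝓝 (1 / n)) := by
    have : ContinuousAt ratio 0 := by
      fun_prop (disch := norm_num)
    simpa [ratio] using this.tendsto.mono_left nhdsWithin_le_nhds
  obtain ⟨ε, hratio_lt, hε, hε2⟩ :=
    ((hratio.eventually (gt_mem_nhds (lt_add_of_pos_right _ hδ))).and
      (Ioo_mem_nhdsGT (show (0 : ℝ) < 1 / n ^ 2 by positivity))).exists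
  exact ⟨ε, hε, not_isApproxWMMS hn hε hε2 hratio_lt⟩

end Counterexample

/-- In the counterexample instance: (i) every allocation giving each agent a
positive value (a positive fraction of his WMMS) gives the last agent at most
`1/n + nε`; (ii) hence no allocation is better than
`(1/n + nε)/(1−(n−1)ε)`-WMMS; (iii) in particular, for every `δ > 0` there is
`ε > 0` such that no allocation is `(1/n + δ)`-WMMS. -/
theorem stmt_4 (n : ℕ) (hn : 2 ≤ n) :
    (∀ ε : ℝ, 0 < ε → ε < 1 / (n : ℝ) ^ 2 →
      ∀ f : Fin (2 * n - 1) → Fin n,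
        (∀ i : Fin n, 0 < bundleVal n ε f i) →
        bundleVal n ε f ⟨n - 1, by omega⟩ ≤ 1 / (n : ℝ) + n * ε) ∧
    (∀ ε : ℝ, 0 < ε → ε < 1 / (n : ℝ) ^ 2 →
      ∀ α : ℝ, (1 / (n : ℝ) + n * ε) / (1 - ((n : ℝ) - 1) * ε) < α →
        ∀ f : Fin (2 * n - 1) → Fin n,
          ¬ (∀ i : Fin n, α * wmmsVal n ε i ≤ bundleVal n ε f i)) ∧
    (∀ δ : ℝ, 0 < δ → ∃ ε : ℝ, 0 < ε ∧
      ∀ f : Fin (2 * n - 1) → Fin n,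
        ¬ (∀ i : Fin n, (1 / (n : ℝ) + δ) * wmmsVal n ε i ≤ bundleVal n ε f i)) := by
  have hn0 : 0 < n := by omega
  exact ⟨fun ε hε _ f hpos => bundleVal_last_le hn0 hε.le hpos,
    fun ε hε hε2 α hα f => not_isApproxWMMS hn0 hε hε2 hα f,
    fun δ hδ => exists_forall_not_isApproxWMMS hn0 hδ⟩
end

section
/- If the items are sorted in nonincreasing order of V_i-value, then the sum V_i(b_i) + V_i(b_{n+i}) + V_i(b_{2n+i}) + … (taking every n-th item starting from index i) is at least V_i(M \ H)/n, where H = {b_1,…,b_{i−1}} is the set of the i−1 most valuable items. -/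
open Finset

/-- If the `m ≥ n` items are sorted in nonincreasing order of `V_i`-value and
`H = {b_1, …, b_{i−1}}` consists of the `i−1` most valuable items, then taking
every `n`-th item starting from index `i` yields total value at least
`V_i(M \ H) / n`.  (Items are indexed by `Fin m`, 0-based, so `H` is the set of
indices `< i − 1` and the selected indices are those `≡ i − 1 (mod n)`.) -/
theorem stmt_5 (n m i : ℕ) (hn : 0 < n) (hm : n ≤ m) (hi1 : 1 ≤ i) (hin : i ≤ n)
    (v : Fin m → ℝ) (hv : ∀ b, 0 ≤ v b)
    (hsorted : ∀ j k : Fin m, j ≤ k → v k ≤ v j) :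
    (∑ b ∈ Finset.univ.filter
        (fun b : Fin m => i - 1 ≤ (b : ℕ) ∧ ((b : ℕ) - (i - 1)) % n = 0), v b) ≥
      (∑ b ∈ Finset.univ.filter (fun b : Fin m => i - 1 ≤ (b : ℕ)), v b) / n := by
  set k := i - 1 with hk
  have hfin : ∀ b : Fin m, k + ((b : ℕ) - k) / n * n < m := by
    intro b
    have h1 : ((b : ℕ) - k) / n * n ≤ (b : ℕ) - k := Nat.div_mul_le_self _ _
    have h2 := b.isLt
    omega
  set f : Fin m → Fin m := fun b => ⟨k + ((b : ℕ) - k) / n * n, hfin b⟩ with hf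
  set S := Finset.univ.filter
      (fun b : Fin m => k ≤ (b : ℕ) ∧ ((b : ℕ) - k) % n = 0) with hS
  set T := Finset.univ.filter (fun b : Fin m => k ≤ (b : ℕ)) with hT
  have hmaps : ∀ b ∈ T, f b ∈ S := by
    intro b _
    simp only [hS, Finset.mem_filter, Finset.mem_univ, true_and, hf]
    exact ⟨Nat.le_add_right _ _, by simp [Nat.mul_mod_left]⟩
  have hSnonneg : 0 ≤ ∑ s ∈ S, v s := Finset.sum_nonneg fun s _ => hv s
  have key : ∑ b ∈ T, v b ≤ (n : ℝ) * ∑ s ∈ S, v s := by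
    rw [← Finset.sum_fiberwise_of_maps_to hmaps v, Finset.mul_sum]
    apply Finset.sum_le_sum
    intro s _
    have hfiber : ∀ b ∈ T.filter (fun b => f b = s),
        (s : ℕ) ≤ (b : ℕ) ∧ (b : ℕ) < (s : ℕ) + n := by
      intro b hb
      simp only [Finset.mem_filter, Finset.mem_univ, true_and, hT, hf] at hb
      obtain ⟨hbk, hfb⟩ := hb
      have hval : k + ((b : ℕ) - k) / n * n = (s : ℕ) := congrArg Fin.val hfb
      have h2 : ((b : ℕ) - k) % n < n := Nat.mod_lt _ hn
      have h3 : ((b : ℕ) - k) / n * n + ((b : ℕ) - k) % n = (b : ℕ) - k := by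
        rw [Nat.mul_comm]; exact Nat.div_add_mod _ _
      omega
    have hcard : (T.filter (fun b => f b = s)).card ≤ n := by
      have hinj : (T.filter (fun b => f b = s)).card
          ≤ (Finset.Ico (s : ℕ) ((s : ℕ) + n)).card := by
        apply Finset.card_le_card_of_injOn Fin.val
        · intro b hb
          have := hfiber b hb
          simp [Finset.mem_Ico, this.1, this.2]
        · exact Fin.val_injective.injOn
      simpa using hinj
    calc ∑ b ∈ T.filter (fun b => f b = s), v b
        ≤ (T.filter (fun b => f b = s)).card • v s := by
          apply Finset.sum_le_card_nsmul
          intro b hb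
          exact hsorted s b (by exact_mod_cast (hfiber b hb).1)
      _ ≤ (n : ℝ) * v s := by
          rw [nsmul_eq_mul]
          exact mul_le_mul_of_nonneg_right (by exact_mod_cast hcard) (hv s)
  rw [ge_iff_le, div_le_iff₀ (by exact_mod_cast hn : (0:ℝ) < n)]
  calc ∑ b ∈ T, v b ≤ (n : ℝ) * ∑ s ∈ S, v s := key
    _ = (∑ s ∈ S, v s) * n := mul_comm _ _
end

section
/- The round-robin algorithm in which agents, sorted in nonincreasing order of entitlement, repeatedly take (in cyclic order) their most valuable remaining item, produces an allocation in which every agent i receives a bundle of value at least WMMS_i / n. -/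
/-!
Let `F` be the (at most `i`) items taken before agent `i`'s first pick. In any partition one of
the bundles `0, …, i` avoids `F` by pigeonhole, and as its entitlement is at least `e i`, the
weighted value of that bundle is at most `V i (M \ F)`. Every item picked in a round `t ≥ i` is
worth to `i` at most what `i` took in its latest turn not after `t`, and each such turn covers at
most `n` rounds; hence `V i (M \ F)` is at most `n` times the value of `i`'s bundle.
-/

open Finset

theorem WMMS_le_sum_compl {n m : ℕ} {e : Fin n → ℝ} (he : ∀ j, 0 < e j) (he_anti : Antitone e)
    {v : Fin m → ℝ} (hv : ∀ b, 0 ≤ v b) {i : Fin n} {T : Finset (Fin m)} (hT : #T ≤ i) :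
    WMMS e v i ≤ ∑ b ∈ Tᶜ, v b := by
  classical
  refine Real.iSup_le (fun f => ?_) (sum_nonneg fun b _ => hv b)
  -- `T` meets at most `i` of the `i + 1` bundles `0, …, i`.
  obtain ⟨j, hji, hjT⟩ : ∃ j ∈ Iic i, j ∉ T.image f :=
    exists_mem_notMem_of_card_lt_card <| by
      rw [Fin.card_Iic]; exact (card_image_le.trans hT).trans_lt i.val.lt_succ_self
  have hbundle : ∑ b ∈ univ.filter (fun b => f b = j), v b ≤ ∑ b ∈ Tᶜ, v b :=
    sum_le_sum_of_subset_of_nonneg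
      (fun b hb => mem_compl.2 fun hbT => hjT (mem_image.2 ⟨b, hbT, (mem_filter.1 hb).2⟩))
      (fun b _ _ => hv b)
  calc ⨅ j, (∑ b ∈ univ.filter (fun b => f b = j), v b) * (e i / e j)
      ≤ (∑ b ∈ univ.filter (fun b => f b = j), v b) * (e i / e j) :=
        ciInf_le (Set.finite_range _).bddBelow j
    _ ≤ ∑ b ∈ univ.filter (fun b => f b = j), v b :=
        mul_le_of_le_one_right (sum_nonneg fun b _ => hv b)
          ((div_le_one (he j)).2 (he_anti (mem_Iic.1 hji)))
    _ ≤ ∑ b ∈ Tᶜ, v b := hbundle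

/-- For `i ≤ t`, the latest round `≤ t` at which agent `i` picks, when agents pick cyclically
with period `n`. -/
def prevTurn (n i t : ℕ) : ℕ := t - (t - i) % n

theorem prevTurn_le (n i t : ℕ) : prevTurn n i t ≤ t := Nat.sub_le _ _

theorem prevTurn_mod {n i t : ℕ} (hi : i < n) (hit : i ≤ t) : prevTurn n i t % n = i := by
  have h := Nat.div_add_mod (t - i) n
  have : prevTurn n i t = i + n * ((t - i) / n) := by unfold prevTurn; omega
  rw [this, Nat.add_mul_mod_self_left, Nat.mod_eq_of_lt hi]

theorem lt_prevTurn_add {n : ℕ} (i t : ℕ) (hn : 0 < n) : t < prevTurn n i t + n := by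
  have h := Nat.mod_lt (t - i) hn
  have h' := Nat.mod_le (t - i) n
  unfold prevTurn; omega

theorem sum_Ici_le_mul_sum_turns {m n : ℕ} (i : Fin n) (a : Fin m → ℝ) (ha : ∀ t, 0 ≤ a t)
    (hdom : ∀ u t : Fin m, (u : ℕ) % n = i → u ≤ t → a t ≤ a u) :
    ∑ t ∈ univ.filter (fun t : Fin m => (i : ℕ) ≤ t), a t ≤
      n * ∑ t ∈ univ.filter (fun t : Fin m => (t : ℕ) % n = i), a t := by
  classical
  set A := univ.filter (fun t : Fin m => (i : ℕ) ≤ t)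
  set B := univ.filter (fun t : Fin m => (t : ℕ) % n = i)
  let K : Fin m → Fin m := fun t => ⟨prevTurn n i t, (prevTurn_le n i t).trans_lt t.isLt⟩
  have hKB : ∀ t ∈ A, K t ∈ B := fun t ht =>
    mem_filter.2 ⟨mem_univ _, prevTurn_mod i.isLt (mem_filter.1 ht).2⟩
  have hfiber : ∀ u, #{t ∈ A | K t = u} ≤ n := by
    intro u
    calc #{t ∈ A | K t = u} ≤ #(Ico (u : ℕ) (u + n)) := by
          refine card_le_card_of_injOn Fin.val (fun t ht => ?_) Fin.val_injective.injOn
          obtain ⟨htA, rfl⟩ := mem_filter.1 ht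
          exact mem_Ico.2 ⟨prevTurn_le n i t, lt_prevTurn_add i t i.pos⟩
      _ = n := by simp
  calc ∑ t ∈ A, a t ≤ ∑ t ∈ A, a (K t) :=
        sum_le_sum fun t ht => hdom _ _ (hKB t ht |> mem_filter.1).2 (prevTurn_le n i t)
    _ = ∑ u ∈ A.image K, #{t ∈ A | K t = u} • a u := sum_comp a K
    _ ≤ ∑ u ∈ A.image K, n • a u :=
        sum_le_sum fun u _ => nsmul_le_nsmul_left (ha u) (hfiber u)
    _ ≤ ∑ u ∈ B, n • a u :=
        sum_le_sum_of_subset_of_nonneg (image_subset_iff.2 hKB)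
          (fun u _ _ => nsmul_nonneg (ha u) n)
    _ = n * ∑ u ∈ B, a u := by simp only [nsmul_eq_mul, mul_sum]

theorem stmt_6_general (n m : ℕ) (hn : 0 < n)
    (e : Fin n → ℝ) (hepos : ∀ i, 0 < e i)
    (hesorted : ∀ i j : Fin n, i ≤ j → e j ≤ e i)
    (V : Fin n → Fin m → ℝ) (hV : ∀ i b, 0 ≤ V i b)
    (g : Fin m → Fin m) (hginj : Function.Injective g)
    (hgreedy : ∀ t b : Fin m, (∀ s : Fin m, s < t → g s ≠ b) →
      V ⟨(t : ℕ) % n, Nat.mod_lt _ hn⟩ b ≤ V ⟨(t : ℕ) % n, Nat.mod_lt _ hn⟩ (g t)) :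
    ∀ i : Fin n,
      WMMS e (V i) i / n ≤
        ∑ t ∈ Finset.univ.filter (fun t : Fin m => (t : ℕ) % n = (i : ℕ)),
          V i (g t) := by
  classical
  intro i
  set S := univ.filter (fun t : Fin m => (t : ℕ) < i)
  have hgS : (S.image g)ᶜ = Sᶜ.image g := coe_injective <| by
    push_cast; exact (Set.image_compl_eq ⟨hginj, Finite.surjective_of_injective hginj⟩).symm
  have hS : #(S.image g) ≤ i :=
    card_image_le.trans ((Fin.card_filter_val_lt).trans_le (min_le_right _ _))
  have hdom : ∀ u t : Fin m, (u : ℕ) % n = i → u ≤ t → V i (g t) ≤ V i (g u) := by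
    intro u t hu hut
    -- `g t` is still available in round `u ≤ t`, as `g` is injective.
    have := hgreedy u (g t) fun s hs hst => (hs.trans_le hut).ne (hginj hst)
    simpa only [hu] using this
  rw [div_le_iff₀' (by exact_mod_cast hn)]
  calc WMMS e (V i) i ≤ ∑ b ∈ (S.image g)ᶜ, V i b :=
        WMMS_le_sum_compl hepos (fun _ _ h => hesorted _ _ h) (hV i) hS
    _ = ∑ t ∈ univ.filter (fun t : Fin m => (i : ℕ) ≤ t), V i (g t) := by
        rw [hgS, sum_image hginj.injOn, compl_filter]; simp only [not_lt]
    _ ≤ _ := sum_Ici_le_mul_sum_turns i _ (fun t => hV i (g t)) hdom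

/-- Round-robin: agents are sorted in nonincreasing order of entitlement and pick
in cyclic order; `g t` is the item picked in round `t` (0-based), namely a most
valuable remaining item for the picking agent `⟨t % n⟩`.  Every agent `i` ends
up with a bundle worth at least `WMMS_i / n`. -/
theorem stmt_6 (n m : ℕ) (hn : 0 < n)
    (e : Fin n → ℝ) (hepos : ∀ i, 0 < e i) (hesum : ∑ i, e i = 1)
    (hesorted : ∀ i j : Fin n, i ≤ j → e j ≤ e i)
    (V : Fin n → Fin m → ℝ) (hV : ∀ i b, 0 ≤ V i b)
    (g : Fin m → Fin m) (hginj : Function.Injective g)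
    (hgreedy : ∀ t b : Fin m, (∀ s : Fin m, s < t → g s ≠ b) →
      V ⟨(t : ℕ) % n, Nat.mod_lt _ hn⟩ b ≤ V ⟨(t : ℕ) % n, Nat.mod_lt _ hn⟩ (g t)) :
    ∀ i : Fin n,
      WMMS e (V i) i / n ≤
        ∑ t ∈ Finset.univ.filter (fun t : Fin m => (t : ℕ) % n = (i : ℕ)),
          V i (g t) :=
  stmt_6_general n m hn e hepos hesorted V hV g hginj hgreedy
end

section
/- If for every agent i and every item b, V_i({b}) ≤ WMMS_i, then Algorithm 3 (the greedy candidate-set algorithm) never allocates a bundle of total value exceeding WMMS_i to any agent i. -/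
open Finset

lemma wmms_nonneg {n m : ℕ} (hn : 0 < n) (e : Fin n → ℝ) (hepos : ∀ i, 0 < e i)
    (v : Fin m → ℝ) (hv : ∀ b, 0 ≤ v b) (i : Fin n) : 0 ≤ WMMS e v i := by
  have : Nonempty (Fin n) := ⟨⟨0, hn⟩⟩
  have hb : BddAbove (Set.range fun f : Fin m → Fin n => ⨅ j,
      (∑ b ∈ Finset.univ.filter (fun b => f b = j), v b) * (e i / e j)) :=
    (Set.finite_range _).bddAbove
  refine le_trans ?_ (le_ciSup hb (fun _ => i))
  refine le_ciInf fun j => ?_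
  exact mul_nonneg (Finset.sum_nonneg fun b _ => hv b)
    (le_of_lt (div_pos (hepos i) (hepos j)))

/-- Algorithm 3 (greedy candidate-set algorithm), encoded as a run: at step `t`
item `s t` is assigned to agent `a t`; the recipient is unsatisfied (has so far
received value `< WMMS/2`), and the chosen pair maximizes `V_i(b)/WMMS_i` over
all unsatisfied agents `i` and remaining items `b`.  If `V_i(b) ≤ WMMS_i` for
all `i, b`, then no agent ever receives a bundle of total value exceeding his
`WMMS_i`. -/
theorem stmt_8 (n m : ℕ) (hn : 0 < n)
    (e : Fin n → ℝ) (hepos : ∀ i, 0 < e i) (hesum : ∑ i, e i = 1)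
    (V : Fin n → Fin m → ℝ) (hV : ∀ i b, 0 ≤ V i b)
    (hres : ∀ (i : Fin n) (b : Fin m), V i b ≤ WMMS e (V i) i)
    (T : ℕ) (a : Fin T → Fin n) (s : Fin T → Fin m) (hs : Function.Injective s)
    (hunsat : ∀ t : Fin T,
      (∑ u ∈ Finset.univ.filter (fun u => u < t ∧ a u = a t), V (a t) (s u)) <
        WMMS e (V (a t)) (a t) / 2)
    (hmax : ∀ (t : Fin T) (i : Fin n) (b : Fin m),
      (∑ u ∈ Finset.univ.filter (fun u => u < t ∧ a u = i), V i (s u)) <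
          WMMS e (V i) i / 2 →
      (∀ u : Fin T, u < t → s u ≠ b) →
      V i b / WMMS e (V i) i ≤ V (a t) (s t) / WMMS e (V (a t)) (a t)) :
    ∀ i : Fin n,
      (∑ u ∈ Finset.univ.filter (fun u => a u = i), V i (s u)) ≤
        WMMS e (V i) i := by
  intro i
  set W := WMMS e (V i) i with hW
  have hWnn : 0 ≤ W := wmms_nonneg hn e hepos (V i) (hV i) i
  set S := Finset.univ.filter (fun u : Fin T => a u = i) with hS
  rcases S.eq_empty_or_nonempty with h | h
  · rw [h, Finset.sum_empty]; exact hWnn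
  · set t := S.max' h with htd
    have htS : t ∈ S := S.max'_mem h
    have hat : a t = i := (Finset.mem_filter.mp htS).2
    have hle : ∀ u ∈ S, u ≤ t := fun u hu => S.le_max' u hu
    have hSsplit : S = insert t (Finset.univ.filter (fun u : Fin T => u < t ∧ a u = i)) := by
      ext u
      simp only [hS, Finset.mem_insert, Finset.mem_filter, Finset.mem_univ, true_and]
      constructor
      · intro hu
        rcases eq_or_lt_of_le (hle u (by simp [hS, hu])) with he | hl
        · exact Or.inl he
        · exact Or.inr ⟨hl, hu⟩
      · rintro (rfl | ⟨_, hu⟩)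
        · exact hat
        · exact hu
    have hnmem : t ∉ Finset.univ.filter (fun u : Fin T => u < t ∧ a u = i) := by
      simp [lt_irrefl]
    have hsum : (∑ u ∈ S, V i (s u)) =
        V i (s t) + ∑ u ∈ Finset.univ.filter (fun u : Fin T => u < t ∧ a u = i), V i (s u) := by
      rw [hSsplit, Finset.sum_insert hnmem]
    have hprev : (∑ u ∈ Finset.univ.filter (fun u : Fin T => u < t ∧ a u = i),
        V i (s u)) < W / 2 := by
      have := hunsat t
      rwa [hat] at this
    rw [hsum]
    rcases (Finset.univ.filter (fun u : Fin T => u < t ∧ a u = i)).eq_empty_or_nonempty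
      with he | ⟨u, hu⟩
    · rw [he, Finset.sum_empty, add_zero]
      exact hres i (s t)
    · -- there is an earlier assignment u to i
      obtain ⟨hut, hau⟩ := (Finset.mem_filter.mp hu).2
      have hWpos : 0 < W := by
        have h0 : (0:ℝ) ≤ ∑ u ∈ Finset.univ.filter (fun u : Fin T => u < t ∧ a u = i),
            V i (s u) := Finset.sum_nonneg fun b _ => hV i (s b)
        linarith
      -- item s t was still available at time u
      have havail : ∀ u' : Fin T, u' < u → s u' ≠ s t := by
        intro u' hu' hcontra
        have : u' = t := hs hcontra
        omega
      have hprevu : (∑ w ∈ Finset.univ.filter (fun w : Fin T => w < u ∧ a w = i),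
          V i (s w)) < W / 2 := by
        have := hunsat u
        rwa [hau] at this
      have hdiv := hmax u i (s t) hprevu havail
      rw [hau] at hdiv
      have hst_le : V i (s t) ≤ V i (s u) :=
        (div_le_div_iff_of_pos_right hWpos).mp hdiv
      have hsu_le : V i (s u) ≤ ∑ w ∈ Finset.univ.filter (fun w : Fin T => w < t ∧ a w = i),
          V i (s w) := Finset.single_le_sum (fun b _ => hV i (s b)) hu
      linarith
end

section
/- There exists an integral allocation of the items to the agents in which every agent i receives a bundle of value at least WMMS_i − max_j V_i({b_j}). -/
open Finset

section Aux

open Classical in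
/-- The set of fractional entries of a fractional allocation. -/
noncomputable def fracSet {n m : ℕ} (g : Fin n → Fin m → ℝ) : Finset (Fin n × Fin m) :=
  Finset.univ.filter (fun p => g p.1 p.2 ≠ 0 ∧ g p.1 p.2 ≠ 1)

/-- Feasibility of a fractional allocation. -/
def Feas {n m : ℕ} (e : Fin n → ℝ) (V : Fin n → Fin m → ℝ) (g : Fin n → Fin m → ℝ) : Prop :=
  (∀ i j, 0 ≤ g i j) ∧ (∀ i j, g i j ≤ 1) ∧ (∀ j, ∑ i, g i j ≤ 1) ∧
  (∀ i, e i * ∑ j, V i j ≤ ∑ j, g i j * V i j)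

lemma mem_fracSet_iff {n m : ℕ} {g : Fin n → Fin m → ℝ} {p : Fin n × Fin m} :
    p ∈ fracSet g ↔ g p.1 p.2 ≠ 0 ∧ g p.1 p.2 ≠ 1 := by
  classical
  simp [fracSet]

lemma hall_cond {n m : ℕ} (e : Fin n → ℝ) (V : Fin n → Fin m → ℝ)
    (g : Fin n → Fin m → ℝ) (hg : Feas e V g)
    (hmin : ∀ g', Feas e V g' → (fracSet g).card ≤ (fracSet g').card)
    (C : Finset (Fin n × Fin m)) (hC : C ⊆ fracSet g) :
    C.card ≤ (C.image Prod.fst).card + (C.image Prod.snd).card := by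
  classical
  by_contra hlt
  push_neg at hlt
  set A := C.image Prod.fst with hA
  set I := C.image Prod.snd with hI
  set M : Matrix (↥A ⊕ ↥I) (↥C) ℝ := fun w c =>
    match w with
    | Sum.inl i => if c.1.1 = i.1 then V i.1 c.1.2 else 0
    | Sum.inr j => if c.1.2 = j.1 then 1 else 0 with hM
  have hnotinj : ¬ Function.Injective M.mulVecLin := by
    intro hinj
    have h1 := LinearMap.finrank_le_finrank_of_injective hinj
    rw [Module.finrank_pi, Module.finrank_pi] at h1
    rw [Fintype.card_sum, Fintype.card_coe, Fintype.card_coe, Fintype.card_coe] at h1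
    omega
  rw [Function.not_injective_iff] at hnotinj
  obtain ⟨x, y, hxy, hne⟩ := hnotinj
  set d : ↥C → ℝ := x - y with hd
  have hd0 : d ≠ 0 := sub_ne_zero.mpr hne
  have hMd : M.mulVec d = 0 := by
    have h2 : M.mulVecLin x - M.mulVecLin y = 0 := by rw [hxy]; ring
    rw [← map_sub] at h2
    exact h2
  set D : Fin n → Fin m → ℝ := fun i j => if h : (i, j) ∈ C then d ⟨(i, j), h⟩ else 0 with hD
  have hDC : ∀ i j, D i j ≠ 0 → (i, j) ∈ C := by
    intro i j h
    by_contra hcon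
    rw [hD] at h
    simp only [dif_neg hcon] at h
    exact h rfl
  -- the two conservation laws
  have key : ∀ (w : ↥A ⊕ ↥I), (∑ c : ↥C, M w c * d c) = 0 := by
    intro w
    have := congrFun hMd w
    simpa [Matrix.mulVec, dotProduct] using this
  have hdc : ∀ c : ↥C, d c = D c.1.1 c.1.2 := by
    intro c
    have hc : ((c : Fin n × Fin m).1, (c : Fin n × Fin m).2) ∈ C := by
      simpa using c.2
    rw [hD]
    simp only [dif_pos hc]
  have hDrow : ∀ i, ∑ j, D i j * V i j = 0 := by
    intro i
    by_cases hi : i ∈ A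
    · have h0 : (∑ c : ↥C, M (Sum.inl ⟨i, hi⟩) c * d c) = 0 := key (Sum.inl ⟨i, hi⟩)
      rw [← h0]
      have h1 : (∑ c : ↥C, M (Sum.inl ⟨i, hi⟩) c * d c)
          = ∑ p ∈ C, (if p.1 = i then V i p.2 else 0) * D p.1 p.2 := by
        rw [← Finset.sum_coe_sort C (fun p => (if p.1 = i then V i p.2 else 0) * D p.1 p.2)]
        apply Finset.sum_congr rfl
        intro c _
        rw [hdc c, hM]
      rw [h1]
      have h2 : (∑ p ∈ C, (if p.1 = i then V i p.2 else 0) * D p.1 p.2)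
          = ∑ p : Fin n × Fin m, (if p.1 = i then V i p.2 else 0) * D p.1 p.2 := by
        apply Finset.sum_subset (Finset.subset_univ C)
        intro p _ hp
        have : D p.1 p.2 = 0 := by
          by_contra hcon
          exact hp (hDC p.1 p.2 (by simpa using hcon))
        rw [this, mul_zero]
      rw [h2, Fintype.sum_prod_type]
      have h3 : ∀ a : Fin n, (∑ b : Fin m, (if a = i then V i b else 0) * D a b)
          = if a = i then ∑ b : Fin m, V i b * D a b else 0 := by
        intro a
        by_cases ha : a = i <;> simp [ha]
      simp only [h3]
      rw [Finset.sum_ite_eq' Finset.univ i (fun a => ∑ b : Fin m, V i b * D a b)]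
      simp [mul_comm]
    · apply Finset.sum_eq_zero
      intro j _
      have : D i j = 0 := by
        by_contra hcon
        exact hi (Finset.mem_image.mpr ⟨(i, j), hDC i j hcon, rfl⟩)
      rw [this, zero_mul]
  have hDcol : ∀ j, ∑ i, D i j = 0 := by
    intro j
    by_cases hj : j ∈ I
    · have h0 : (∑ c : ↥C, M (Sum.inr ⟨j, hj⟩) c * d c) = 0 := key (Sum.inr ⟨j, hj⟩)
      rw [← h0]
      have h1 : (∑ c : ↥C, M (Sum.inr ⟨j, hj⟩) c * d c)
          = ∑ p ∈ C, (if p.2 = j then (1:ℝ) else 0) * D p.1 p.2 := by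
        rw [← Finset.sum_coe_sort C (fun p => (if p.2 = j then (1:ℝ) else 0) * D p.1 p.2)]
        apply Finset.sum_congr rfl
        intro c _
        rw [hdc c, hM]
      rw [h1]
      have h2 : (∑ p ∈ C, (if p.2 = j then (1:ℝ) else 0) * D p.1 p.2)
          = ∑ p : Fin n × Fin m, (if p.2 = j then (1:ℝ) else 0) * D p.1 p.2 := by
        apply Finset.sum_subset (Finset.subset_univ C)
        intro p _ hp
        have : D p.1 p.2 = 0 := by
          by_contra hcon
          exact hp (hDC p.1 p.2 (by simpa using hcon))
        rw [this, mul_zero]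
      rw [h2, Fintype.sum_prod_type]
      apply Finset.sum_congr rfl
      intro a _
      have h3 : ∀ b : Fin m, (if b = j then (1:ℝ) else 0) * D a b
          = if b = j then D a b else 0 := by
        intro b; by_cases hb : b = j <;> simp [hb]
      simp only [h3]
      rw [Finset.sum_ite_eq' Finset.univ j (fun b => D a b)]
      simp
    · apply Finset.sum_eq_zero
      intro i _
      by_contra hcon
      exact hj (Finset.mem_image.mpr ⟨(i, j), hDC i j hcon, rfl⟩)
  -- perturbation
  have hfrac : ∀ p ∈ C, 0 < g p.1 p.2 ∧ g p.1 p.2 < 1 := by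
    intro p hp
    have h := mem_fracSet_iff.mp (hC hp)
    exact ⟨lt_of_le_of_ne (hg.1 p.1 p.2) (Ne.symm h.1), lt_of_le_of_ne (hg.2.1 p.1 p.2) h.2⟩
  obtain ⟨c0, hc0⟩ := Function.ne_iff.mp hd0
  set s := C.filter (fun p => D p.1 p.2 ≠ 0) with hsdef
  have hs : s.Nonempty := by
    refine ⟨(c0 : Fin n × Fin m), Finset.mem_filter.mpr ⟨by simpa using c0.2, ?_⟩⟩
    rw [← hdc c0]
    simpa using hc0
  set step : (Fin n × Fin m) → ℝ := fun p =>
    if 0 < D p.1 p.2 then (1 - g p.1 p.2) / D p.1 p.2 else g p.1 p.2 / (-D p.1 p.2) with hstep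
  set t0 := s.inf' hs step with ht0
  have hsC : s ⊆ C := Finset.filter_subset _ _
  have ht0pos : 0 < t0 := by
    rw [ht0, Finset.lt_inf'_iff]
    intro p hp
    obtain ⟨hpC, hpD⟩ := Finset.mem_filter.mp hp
    obtain ⟨hg0, hg1⟩ := hfrac p hpC
    rw [hstep]
    by_cases hpos : 0 < D p.1 p.2
    · simp only [if_pos hpos]
      exact div_pos (by linarith) hpos
    · simp only [if_neg hpos]
      have : D p.1 p.2 < 0 := lt_of_le_of_ne (not_lt.mp hpos) hpD
      exact div_pos hg0 (by linarith)
  set g2 : Fin n → Fin m → ℝ := fun i j => g i j + t0 * D i j with hg2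
  -- entry bounds for g2
  have hbnd : ∀ i j, 0 ≤ g2 i j ∧ g2 i j ≤ 1 := by
    intro i j
    by_cases hDij : D i j = 0
    · rw [hg2]; simp only [hDij, mul_zero, add_zero]
      exact ⟨hg.1 i j, hg.2.1 i j⟩
    · have hpC : (i, j) ∈ C := hDC i j hDij
      have hps : (i, j) ∈ s := Finset.mem_filter.mpr ⟨hpC, hDij⟩
      have hle : t0 ≤ step (i, j) := Finset.inf'_le step hps
      obtain ⟨hg0, hg1⟩ := hfrac (i, j) hpC
      simp only at hg0 hg1
      have hgoal : 0 ≤ g i j + t0 * D i j ∧ g i j + t0 * D i j ≤ 1 := by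
        by_cases hpos : 0 < D i j
        · constructor
          · have : 0 ≤ t0 * D i j := mul_nonneg ht0pos.le hpos.le
            linarith
          · have hle' : t0 ≤ (1 - g i j) / D i j := by
              simpa [hstep, if_pos hpos] using hle
            have h4 : t0 * D i j ≤ ((1 - g i j) / D i j) * D i j :=
              mul_le_mul_of_nonneg_right hle' hpos.le
            rw [div_mul_cancel₀ _ (ne_of_gt hpos)] at h4
            linarith
        · have hneg : D i j < 0 := lt_of_le_of_ne (not_lt.mp hpos) hDij
          constructor
          · have hle' : t0 ≤ g i j / (-D i j) := by
              simpa [hstep, if_neg hpos] using hle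
            have h4 : (g i j / (-D i j)) * D i j ≤ t0 * D i j :=
              mul_le_mul_of_nonpos_right hle' hneg.le
            have h5 : (g i j / (-D i j)) * D i j = -g i j := by
              rw [div_mul_eq_mul_div, div_neg, mul_div_assoc, div_self hDij, mul_one]
            rw [h5] at h4
            linarith
          · have : t0 * D i j ≤ 0 := mul_nonpos_of_nonneg_of_nonpos ht0pos.le hneg.le
            linarith
      exact hgoal
  have hg2feas : Feas e V g2 := by
    refine ⟨fun i j => (hbnd i j).1, fun i j => (hbnd i j).2, fun j => ?_, fun i => ?_⟩
    · have : (∑ i, g2 i j) = (∑ i, g i j) + t0 * ∑ i, D i j := by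
        rw [hg2, Finset.sum_add_distrib, Finset.mul_sum]
      rw [this, hDcol j, mul_zero, add_zero]
      exact hg.2.2.1 j
    · have : (∑ j, g2 i j * V i j) = (∑ j, g i j * V i j) + t0 * ∑ j, D i j * V i j := by
        rw [hg2, Finset.mul_sum, ← Finset.sum_add_distrib]
        apply Finset.sum_congr rfl
        intro j _
        ring
      rw [this, hDrow i, mul_zero, add_zero]
      exact hg.2.2.2 i
  have hsub : fracSet g2 ⊆ fracSet g := by
    intro p hp
    by_cases hDij : D p.1 p.2 = 0
    · rw [mem_fracSet_iff] at hp ⊢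
      rw [hg2] at hp
      simpa [hDij] using hp
    · exact hC (hDC p.1 p.2 hDij)
  obtain ⟨pm, hpms, hpmeq⟩ := Finset.exists_mem_eq_inf' hs step
  have hpmC : pm ∈ C := hsC hpms
  have hpmD : D pm.1 pm.2 ≠ 0 := (Finset.mem_filter.mp hpms).2
  have hpmfrac : pm ∈ fracSet g := hC hpmC
  have hpmnot : pm ∉ fracSet g2 := by
    rw [mem_fracSet_iff]
    push_neg
    intro h0
    have h0' : g pm.1 pm.2 + t0 * D pm.1 pm.2 ≠ 0 := h0
    show g pm.1 pm.2 + t0 * D pm.1 pm.2 = 1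
    rw [← ht0] at hpmeq
    by_cases hpos : 0 < D pm.1 pm.2
    · have h1 : t0 = (1 - g pm.1 pm.2) / D pm.1 pm.2 := by
        rw [hpmeq]; simp only [hstep]; rw [if_pos hpos]
      rw [h1, div_mul_cancel₀ _ (ne_of_gt hpos)]
      ring
    · have hneg : D pm.1 pm.2 < 0 := lt_of_le_of_ne (not_lt.mp hpos) hpmD
      have h1 : t0 = g pm.1 pm.2 / (-D pm.1 pm.2) := by
        rw [hpmeq]; simp only [hstep]; rw [if_neg hpos]
      exfalso
      apply h0'
      rw [h1, div_mul_eq_mul_div, div_neg, mul_div_assoc, div_self hpmD, mul_one]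
      ring
  have hss : fracSet g2 ⊂ fracSet g := ⟨hsub, fun h => hpmnot (h hpmfrac)⟩
  have := hmin g2 hg2feas
  have := Finset.card_lt_card hss
  omega

lemma exists_orientation {n m : ℕ} (e : Fin n → ℝ) (V : Fin n → Fin m → ℝ)
    (g : Fin n → Fin m → ℝ) (hg : Feas e V g)
    (hmin : ∀ g', Feas e V g' → (fracSet g).card ≤ (fracSet g').card) :
    ∃ F : {p : Fin n × Fin m // p ∈ fracSet g} → (Fin n ⊕ Fin m),
      Function.Injective F ∧ ∀ x, F x = Sum.inl x.1.1 ∨ F x = Sum.inr x.1.2 := by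
  classical
  set t : {p : Fin n × Fin m // p ∈ fracSet g} → Finset (Fin n ⊕ Fin m) :=
    fun x => {Sum.inl x.1.1, Sum.inr x.1.2} with ht
  have hhall : ∀ s : Finset {p : Fin n × Fin m // p ∈ fracSet g},
      s.card ≤ (s.biUnion t).card := by
    intro s
    set C : Finset (Fin n × Fin m) := s.image Subtype.val with hCdef
    have hCsub : C ⊆ fracSet g := by
      intro p hp
      obtain ⟨x, _, rfl⟩ := Finset.mem_image.mp hp
      exact x.2
    have hcard : C.card = s.card := Finset.card_image_of_injective s Subtype.val_injective
    have hunion : s.biUnion t =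
        ((C.image Prod.fst).image Sum.inl) ∪ ((C.image Prod.snd).image Sum.inr) := by
      ext w
      simp only [Finset.mem_biUnion, Finset.mem_union, Finset.mem_image, ht,
        Finset.mem_insert, Finset.mem_singleton, hCdef]
      constructor
      · rintro ⟨x, hx, hw | hw⟩
        · exact Or.inl ⟨x.1.1, ⟨x.1, ⟨x, hx, rfl⟩, rfl⟩, hw.symm⟩
        · exact Or.inr ⟨x.1.2, ⟨x.1, ⟨x, hx, rfl⟩, rfl⟩, hw.symm⟩
      · rintro (⟨i, ⟨p, ⟨x, hx, rfl⟩, rfl⟩, rfl⟩ | ⟨j, ⟨p, ⟨x, hx, rfl⟩, rfl⟩, rfl⟩)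
        · exact ⟨x, hx, Or.inl rfl⟩
        · exact ⟨x, hx, Or.inr rfl⟩
    have hdisj : Disjoint ((C.image Prod.fst).image Sum.inl)
        ((C.image Prod.snd).image (Sum.inr : Fin m → Fin n ⊕ Fin m)) := by
      rw [Finset.disjoint_left]
      rintro w hw1 hw2
      obtain ⟨i, _, rfl⟩ := Finset.mem_image.mp hw1
      obtain ⟨j, _, hj⟩ := Finset.mem_image.mp hw2
      exact Sum.inl_ne_inr hj.symm
    rw [hunion, Finset.card_union_of_disjoint hdisj,
      Finset.card_image_of_injective _ Sum.inl_injective,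
      Finset.card_image_of_injective _ Sum.inr_injective, ← hcard]
    exact hall_cond e V g hg hmin C hCsub
  obtain ⟨F, hFinj, hFmem⟩ :=
    (Finset.all_card_le_biUnion_card_iff_exists_injective t).mp hhall
  refine ⟨F, hFinj, fun x => ?_⟩
  have := hFmem x
  simp only [ht, Finset.mem_insert, Finset.mem_singleton] at this
  exact this

end Aux

lemma wmms_le {n m : ℕ} (hn : 0 < n)
    (e : Fin n → ℝ) (hepos : ∀ i, 0 < e i) (hesum : ∑ i, e i = 1)
    (v : Fin m → ℝ) (hv : ∀ b, 0 ≤ v b) (i : Fin n) :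
    WMMS e v i ≤ e i * ∑ b, v b := by
  classical
  haveI : Nonempty (Fin n) := ⟨⟨0, hn⟩⟩
  apply ciSup_le
  intro f
  -- some fiber is small
  have hex : ∃ j : Fin n, (∑ b ∈ Finset.univ.filter (fun b => f b = j), v b) ≤ e j * ∑ b, v b := by
    by_contra hcon
    push_neg at hcon
    have h1 : ∑ j : Fin n, e j * ∑ b, v b < ∑ j : Fin n, ∑ b ∈ Finset.univ.filter (fun b => f b = j), v b :=
      Finset.sum_lt_sum_of_nonempty Finset.univ_nonempty (fun j _ => hcon j)
    rw [Finset.sum_fiberwise Finset.univ f v, ← Finset.sum_mul, hesum, one_mul] at h1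
    exact lt_irrefl _ h1
  obtain ⟨j0, hj0⟩ := hex
  have hbdd : BddBelow (Set.range fun j : Fin n =>
      (∑ b ∈ Finset.univ.filter (fun b => f b = j), v b) * (e i / e j)) :=
    (Set.finite_range _).bddBelow
  refine le_trans (ciInf_le hbdd j0) ?_
  have hS : 0 ≤ ∑ b ∈ Finset.univ.filter (fun b => f b = j0), v b :=
    Finset.sum_nonneg (fun b _ => hv b)
  rw [div_eq_mul_inv, ← mul_assoc, mul_comm _ (e i), mul_assoc]
  have h2 : (∑ b ∈ Finset.univ.filter (fun b => f b = j0), v b) * (e j0)⁻¹ ≤ ∑ b, v b := by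
    rw [← div_eq_mul_inv, div_le_iff₀ (hepos j0)]
    linarith [hj0]
  exact mul_le_mul_of_nonneg_left h2 (hepos i).le

/-- There exists an integral allocation (an assignment `f` of items to agents)
in which every agent `i` receives a bundle of value at least
`WMMS_i − max_j V_i({b_j})`. -/
theorem stmt_12 (n m : ℕ) (hn : 0 < n) (hm : 0 < m)
    (e : Fin n → ℝ) (hepos : ∀ i, 0 < e i) (hesum : ∑ i, e i = 1)
    (V : Fin n → Fin m → ℝ) (hV : ∀ i b, 0 ≤ V i b) :
    ∃ f : Fin m → Fin n, ∀ i : Fin n,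
      WMMS e (V i) i - (⨆ j : Fin m, V i j) ≤
        ∑ b ∈ Finset.univ.filter (fun b => f b = i), V i b := by
  classical
  -- a feasible fractional allocation exists
  have hfeas0 : Feas e V (fun i _ => e i) := by
    refine ⟨fun i j => (hepos i).le, fun i j => ?_, fun j => le_of_eq hesum, fun i => le_of_eq ?_⟩
    · calc e i ≤ ∑ k, e k := Finset.single_le_sum (fun k _ => (hepos k).le) (mem_univ i)
      _ = 1 := hesum
    · rw [Finset.mul_sum]
  -- pick one with minimal number of fractional entries
  have hex : ∃ k, ∃ g, Feas e V g ∧ (fracSet g).card = k := ⟨_, _, hfeas0, rfl⟩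
  obtain ⟨g, hg, hgcard⟩ := Nat.find_spec hex
  have hmin : ∀ g', Feas e V g' → (fracSet g).card ≤ (fracSet g').card := by
    intro g' hg'
    rw [hgcard]
    exact Nat.find_min' hex ⟨g', hg', rfl⟩
  obtain ⟨F, hFinj, hFmem⟩ := exists_orientation e V g hg hmin
  -- define the allocation
  set alloc : Fin m → Fin n := fun j =>
    if h1 : ∃ i, g i j = 1 then Classical.choose h1
    else if h2 : ∃ i, ∃ h : (i, j) ∈ fracSet g, F ⟨(i, j), h⟩ = Sum.inr j then
      Classical.choose h2
    else if h3 : ∃ i, (i, j) ∈ fracSet g then Classical.choose h3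
    else ⟨0, hn⟩ with halloc
  refine ⟨alloc, fun i => ?_⟩
  -- bounds on the supremum
  have hsup : ∀ j, V i j ≤ ⨆ j' : Fin m, V i j' := fun j =>
    le_ciSup ((Set.finite_range _).bddAbove) j
  have hsup0 : 0 ≤ ⨆ j' : Fin m, V i j' := le_trans (hV i ⟨0, hm⟩) (hsup ⟨0, hm⟩)
  -- two distinct entries in a column are bounded by the column sum
  have pair_le_sum : ∀ (j : Fin m) (a b : Fin n), a ≠ b → g a j + g b j ≤ ∑ i', g i' j := by
    intro j a b hab
    calc g a j + g b j = ∑ i' ∈ ({a, b} : Finset (Fin n)), g i' j := (Finset.sum_pair (f := fun i' => g i' j) hab).symm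
    _ ≤ ∑ i', g i' j :=
      Finset.sum_le_sum_of_subset_of_nonneg (Finset.subset_univ _) (fun i' _ _ => hg.1 i' j)
  have hno1 : ∀ j, g i j ≠ 0 → g i j ≠ 1 → ¬(∃ i', g i' j = 1) := by
    rintro j hgne0 hgne1 ⟨i', hi'⟩
    have hii' : i' ≠ i := fun h => hgne1 (h ▸ hi')
    have h0 : 0 < g i j := lt_of_le_of_ne (hg.1 i j) (Ne.symm hgne0)
    have h4 := pair_le_sum j i' i hii'
    have h5 := hg.2.2.1 j
    rw [hi'] at h4
    linarith
  have halloc1 : ∀ j, g i j = 1 → alloc j = i := by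
    intro j h1
    have hex1 : ∃ i', g i' j = 1 := ⟨i, h1⟩
    simp only [halloc, dif_pos hex1]
    have hspec := Classical.choose_spec hex1
    by_contra hne
    have h4 := pair_le_sum j (Classical.choose hex1) i hne
    have h5 := hg.2.2.1 j
    rw [hspec, h1] at h4
    linarith
  have claim : ∀ j, alloc j ≠ i → g i j ≠ 0 →
      ∃ h : (i, j) ∈ fracSet g, F ⟨(i, j), h⟩ = Sum.inl i := by
    intro j hne hg0
    have hg1 : g i j ≠ 1 := fun h => hne (halloc1 j h)
    have hfr : (i, j) ∈ fracSet g := mem_fracSet_iff.mpr ⟨hg0, hg1⟩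
    refine ⟨hfr, ?_⟩
    rcases hFmem ⟨(i, j), hfr⟩ with h | h
    · exact h
    · exfalso
      have hnex1 : ¬(∃ i', g i' j = 1) := hno1 j hg0 hg1
      have hex2 : ∃ i', ∃ h' : (i', j) ∈ fracSet g, F ⟨(i', j), h'⟩ = Sum.inr j := ⟨i, hfr, h⟩
      apply hne
      simp only [halloc, dif_neg hnex1, dif_pos hex2]
      obtain ⟨h', hFi2⟩ := Classical.choose_spec hex2
      have heq := hFinj (hFi2.trans h.symm)
      exact congrArg (fun x => (x.1).1) heq
  set Bad : Finset (Fin m) := Finset.univ.filter (fun j => alloc j ≠ i ∧ g i j ≠ 0) with hBadDef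
  have hBadcard : Bad.card ≤ 1 := by
    rw [Finset.card_le_one]
    intro j hj j' hj'
    rw [hBadDef, Finset.mem_filter] at hj hj'
    obtain ⟨hfr, hF⟩ := claim j hj.2.1 hj.2.2
    obtain ⟨hfr', hF'⟩ := claim j' hj'.2.1 hj'.2.2
    have heq := hFinj (hF.trans hF'.symm)
    exact congrArg (fun x => (x.1).2) heq
  have hBadsum : ∑ j ∈ Bad, g i j * V i j ≤ ⨆ j' : Fin m, V i j' := by
    rcases Finset.eq_empty_or_nonempty Bad with hB | ⟨j0, hj0⟩
    · rw [hB, Finset.sum_empty]; exact hsup0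
    · have hsingle : Bad = {j0} := by
        apply Finset.eq_singleton_iff_unique_mem.mpr
        exact ⟨hj0, fun x hx => Finset.card_le_one.mp hBadcard x hx j0 hj0⟩
      rw [hsingle, Finset.sum_singleton]
      exact le_trans (mul_le_of_le_one_left (hV i j0) (hg.2.1 i j0)) (hsup j0)
  have hrest : ∑ j ∈ Finset.univ.filter (fun j => ¬ alloc j = i), g i j * V i j
      ≤ ⨆ j' : Fin m, V i j' := by
    refine le_trans (le_of_eq ?_) hBadsum
    symm
    apply Finset.sum_subset
    · intro j hj
      rw [hBadDef, Finset.mem_filter] at hj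
      exact Finset.mem_filter.mpr ⟨Finset.mem_univ j, hj.2.1⟩
    · intro j hj hnj
      rw [Finset.mem_filter] at hj
      have : g i j = 0 := by
        by_contra hcon
        exact hnj (Finset.mem_filter.mpr ⟨Finset.mem_univ j, hj.2, hcon⟩)
      rw [this, zero_mul]
  have hsplit : ∑ j, g i j * V i j
      = ∑ j ∈ Finset.univ.filter (fun j => alloc j = i), g i j * V i j
        + ∑ j ∈ Finset.univ.filter (fun j => ¬ alloc j = i), g i j * V i j :=
    (Finset.sum_filter_add_sum_filter_not Finset.univ _ _).symm
  have hgot : ∑ j ∈ Finset.univ.filter (fun j => alloc j = i), g i j * V i j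
      ≤ ∑ j ∈ Finset.univ.filter (fun j => alloc j = i), V i j :=
    Finset.sum_le_sum (fun j _ => mul_le_of_le_one_left (hV i j) (hg.2.1 i j))
  have hval := hg.2.2.2 i
  have hwm := wmms_le hn e hepos hesum (V i) (hV i) i
  linarith
end

section
/- Fix 0 < ε < 1 and suppose each agent i is deterministically given t_i = ⌊m·e_i⌋ items, each item's value to agent i being an i.i.d. draw from a distribution D_i on [0,1] with mean μ_i > 0. Then there is m' (depending on 1/min_i e_i, 1/min_i μ_i, 1/ε) such that for all m ≥ m', with probability at least 1 − 1/m, every agent i's bundle is worth at least (1−3ε)·e_i·V_i(M), and hence at least (1−3ε)·WMMS_i. -/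
/-!
For each agent `i`, both the value `V_i(M)` of all items and the value `V_i(S_i)` of the bundle
are sums of independent `[0,1]`-valued variables, so by Hoeffding's inequality they exceed
`m μ_i + ε μ_i m`, resp. fall below `|S_i| μ_i - ε e_i μ_i m`, only with probability
`exp (-Θ(m))`. Outside these `2n` bad events, `|S_i| ≥ m e_i - 1` and `ε e_i m ≥ 1` give
`V_i(S_i) ≥ (1 - 3ε) e_i V_i(M)`, and a union bound makes the failure probability at most `1/m`
once `m` is large. Finally `WMMS_i ≤ e_i V_i(M)`: every partition has a part `j` worth at most
`e_j V_i(M)` to agent `i`.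
-/

open Finset MeasureTheory ProbabilityTheory Filter Topology
open scoped NNReal

lemma ProbabilityTheory.HasSubgaussianMGF.mono {Ω : Type*} [MeasurableSpace Ω] {P : Measure Ω}
    {X : Ω → ℝ} {c c' : ℝ≥0} (h : HasSubgaussianMGF X c P) (hc : c ≤ c') :
    HasSubgaussianMGF X c' P :=
  ⟨h.integrable_exp_mul, fun t => (h.mgf_le t).trans (by gcongr)⟩

section Hoeffding

variable {Ω ι : Type*} [MeasurableSpace Ω] {P : Measure Ω} [IsProbabilityMeasure P]
  {Y : ι → Ω → ℝ}

lemma hasSubgaussianMGF_sum_sub_integral (hY : ∀ j, Measurable (Y j)) (hind : iIndepFun Y P)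
    (hbd : ∀ j ω, Y j ω ∈ Set.Icc (0 : ℝ) 1) {s : Finset ι} {N : ℕ} (hs : #s ≤ N) :
    HasSubgaussianMGF (fun ω => ∑ j ∈ s, (Y j ω - P[Y j])) (N / 4) P := by
  have hZ (j : ι) (_ : j ∈ s) : HasSubgaussianMGF (fun ω => Y j ω - P[Y j]) (1 / 4) P := by
    convert hasSubgaussianMGF_of_mem_Icc (μ := P) (hY j).aemeasurable (ae_of_all _ (hbd j))
      using 1
    norm_num
  have hindZ : iIndepFun (fun j ω => Y j ω - P[Y j]) P :=
    hind.comp (fun (j : ι) (y : ℝ) => y - ∫ ω, Y j ω ∂P) fun _ => measurable_sub_const _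
  refine (HasSubgaussianMGF.sum_of_iIndepFun hindZ hZ).mono ?_
  rw [sum_const, nsmul_eq_mul, mul_one_div]
  gcongr

lemma measureReal_sum_sub_integral_ge_le (hY : ∀ j, Measurable (Y j))
    (hind : iIndepFun Y P) (hbd : ∀ j ω, Y j ω ∈ Set.Icc (0 : ℝ) 1) {s : Finset ι} {N : ℕ}
    (hs : #s ≤ N) {t : ℝ} (ht : 0 ≤ t) :
    P.real {ω | t ≤ ∑ j ∈ s, (Y j ω - P[Y j])} ≤ Real.exp (-2 * t ^ 2 / N) := by
  convert (hasSubgaussianMGF_sum_sub_integral hY hind hbd hs).measure_ge_le ht using 2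
  push_cast
  ring

lemma measureReal_sum_integral_sub_ge_le (hY : ∀ j, Measurable (Y j))
    (hind : iIndepFun Y P) (hbd : ∀ j ω, Y j ω ∈ Set.Icc (0 : ℝ) 1) {s : Finset ι} {N : ℕ}
    (hs : #s ≤ N) {t : ℝ} (ht : 0 ≤ t) :
    P.real {ω | t ≤ ∑ j ∈ s, (P[Y j] - Y j ω)} ≤ Real.exp (-2 * t ^ 2 / N) := by
  convert (hasSubgaussianMGF_sum_sub_integral hY hind hbd hs).neg.measure_ge_le ht using 2
  · simp
  · push_cast
    ring

lemma measureReal_deviation_le {m : ℕ} (hm : 0 < m) {X : Fin m → Ω → ℝ}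
    (hX : ∀ j, Measurable (X j)) (hind : iIndepFun X P)
    (hbd : ∀ j ω, X j ω ∈ Set.Icc (0 : ℝ) 1) {μ₀ : ℝ} (hmean : ∀ j, P[X j] = μ₀)
    (S : Finset (Fin m)) {δ δ' : ℝ} (hδ : 0 ≤ δ) (hδ' : 0 ≤ δ') :
    P.real ({ω | δ * m ≤ ∑ j ∈ S, (μ₀ - X j ω)} ∪ {ω | δ' * m ≤ ∑ j, (X j ω - μ₀)}) ≤
      Real.exp (-(2 * δ ^ 2) * m) + Real.exp (-(2 * δ' ^ 2) * m) := by
  have hexp (c : ℝ) : -2 * (c * m) ^ 2 / m = -(2 * c ^ 2) * m := by field_simp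
  have hlow := measureReal_sum_integral_sub_ge_le hX hind hbd
    ((card_le_univ S).trans_eq (Fintype.card_fin m)) (t := δ * m) (by positivity)
  have hup := measureReal_sum_sub_integral_ge_le hX hind hbd (s := univ) (N := m) (by simp)
    (t := δ' * m) (by positivity)
  simp only [hmean, hexp] at hlow hup
  exact (measureReal_union_le _ _).trans (add_le_add hlow hup)

end Hoeffding

lemma nonempty_of_sum_eq_one {ι : Type*} [Fintype ι] {e : ι → ℝ} (he : ∑ i, e i = 1) :
    Nonempty ι :=
  univ_nonempty_iff.1 (nonempty_of_sum_ne_zero (by rw [he]; exact one_ne_zero))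

section WMMS

variable {n m : ℕ} {e : Fin n → ℝ} {v : Fin m → ℝ}

lemma iInf_le_mul_sum (hepos : ∀ i, 0 < e i) (hesum : ∑ i, e i = 1) (i : Fin n)
    (f : Fin m → Fin n) :
    ⨅ j, (∑ b ∈ univ.filter (fun b => f b = j), v b) * (e i / e j) ≤ e i * ∑ b, v b := by
  have := nonempty_of_sum_eq_one hesum
  obtain ⟨j, -, hj⟩ := exists_le_of_sum_le univ_nonempty
    (f := fun j => ∑ b ∈ univ.filter (f · = j), v b) (g := fun j => e j * ∑ b, v b)
    (by rw [sum_fiberwise, ← sum_mul, hesum, one_mul])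
  calc ⨅ j, (∑ b ∈ univ.filter (fun b => f b = j), v b) * (e i / e j)
      ≤ (∑ b ∈ univ.filter (fun b => f b = j), v b) * (e i / e j) :=
        ciInf_le (Set.finite_range _).bddBelow j
    _ ≤ (e j * ∑ b, v b) * (e i / e j) := by
        gcongr; exact div_nonneg (hepos i).le (hepos j).le
    _ = e i * ∑ b, v b := by field_simp [(hepos j).ne']

lemma WMMS_le_mul_sum (hepos : ∀ i, 0 < e i) (hesum : ∑ i, e i = 1) (i : Fin n) :
    WMMS e v i ≤ e i * ∑ b, v b :=
  have := nonempty_of_sum_eq_one hesum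
  ciSup_le (iInf_le_mul_sum hepos hesum i)

lemma WMMS_nonneg (hepos : ∀ i, 0 < e i) (hesum : ∑ i, e i = 1) (hv : ∀ b, 0 ≤ v b)
    (i : Fin n) : 0 ≤ WMMS e v i := by
  have := nonempty_of_sum_eq_one hesum
  refine le_trans ?_ (le_ciSup ⟨_, Set.forall_mem_range.2 (iInf_le_mul_sum hepos hesum i)⟩
    fun _ => i)
  exact le_ciInf fun j => mul_nonneg (sum_nonneg fun b _ => hv b)
    (div_nonneg (hepos i).le (hepos j).le)

lemma mul_WMMS_le_of_mul_sum_le (hepos : ∀ i, 0 < e i) (hesum : ∑ i, e i = 1)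
    (hv : ∀ b, 0 ≤ v b) {i : Fin n} {a T : ℝ} (hT : 0 ≤ T) (h : a * e i * ∑ b, v b ≤ T) :
    a * WMMS e v i ≤ T := by
  rcases le_total a 0 with ha | ha
  · exact (mul_nonpos_of_nonpos_of_nonneg ha (WMMS_nonneg hepos hesum hv i)).trans hT
  · calc a * WMMS e v i ≤ a * (e i * ∑ b, v b) := by
          gcongr; exact WMMS_le_mul_sum hepos hesum i
      _ = a * e i * ∑ b, v b := by ring
      _ ≤ T := h

end WMMS

lemma mul_le_of_deviation_lt {ε e μ m c T U : ℝ} (hε : 0 < ε) (he : 0 < e) (hμ : 0 < μ)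
    (hT0 : 0 ≤ T) (hU0 : 0 ≤ U) (hm : 1 ≤ ε * e * m) (hc : m * e - 1 ≤ c)
    (hT : c * μ - T < ε * e * μ * m) (hU : U - m * μ < ε * μ * m) :
    (1 - 3 * ε) * e * U ≤ T := by
  rcases le_total (1 - 3 * ε) 0 with hε3 | hε3
  · exact (mul_nonpos_of_nonpos_of_nonneg (mul_nonpos_of_nonpos_of_nonneg hε3 he.le) hU0).trans
      hT0
  · have hεm : 0 ≤ (ε * e * m - 1 + 3 * ε ^ 2 * e * m) * μ :=
      mul_nonneg (by nlinarith [mul_le_mul_of_nonneg_left hm hε.le]) hμ.le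
    calc (1 - 3 * ε) * e * U ≤ (1 - 3 * ε) * e * ((1 + ε) * m * μ) := by
          gcongr; linarith
      _ = (m * e - 1) * μ - ε * e * μ * m - (ε * e * m - 1 + 3 * ε ^ 2 * e * m) * μ := by ring
      _ ≤ c * μ - ε * e * μ * m := by nlinarith
      _ ≤ T := by linarith

lemma mul_sum_le_sum_of_deviation_lt {m : ℕ} {ε a μ : ℝ} (hε : 0 < ε) (ha : 0 < a)
    (hμ : 0 < μ) (hm : 1 ≤ ε * a * m) {v : Fin m → ℝ} (hv : ∀ j, 0 ≤ v j) {S : Finset (Fin m)}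
    (hS : #S = ⌊(m : ℝ) * a⌋₊) (hSdev : ∑ j ∈ S, (μ - v j) < ε * a * μ * m)
    (hdev : ∑ j, (v j - μ) < ε * μ * m) :
    (1 - 3 * ε) * a * ∑ j, v j ≤ ∑ j ∈ S, v j := by
  rw [sum_sub_distrib, sum_const, nsmul_eq_mul] at hSdev
  rw [sum_sub_distrib, sum_const, card_univ, Fintype.card_fin, nsmul_eq_mul] at hdev
  refine mul_le_of_deviation_lt hε ha hμ (sum_nonneg fun j _ => hv j)
    (sum_nonneg fun j _ => hv j) hm ?_ hSdev (by linarith)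
  rw [hS]
  exact (Nat.sub_one_lt_floor _).le

lemma eventually_mul_natCast_mul_exp_neg_le_one (K : ℝ) {c : ℝ} (hc : 0 < c) :
    ∀ᶠ m : ℕ in atTop, K * m * Real.exp (-c * m) ≤ 1 := by
  have h : Tendsto (fun x : ℝ => K * x * Real.exp (-c * x)) atTop (𝓝 0) := by
    have := ((Real.tendsto_pow_mul_exp_neg_atTop_nhds_zero 1).comp
      (tendsto_id.const_mul_atTop hc)).const_mul (K / c)
    refine (this.congr fun x => ?_).trans (by simp)
    simp only [Function.comp_apply, id, pow_one]
    field_simp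
  exact tendsto_natCast_atTop_atTop.eventually (h.eventually_le_const one_pos)

lemma one_sub_card_mul_le_measureReal {Ω ι : Type*} [MeasurableSpace Ω] {P : Measure Ω}
    [IsProbabilityMeasure P] [Fintype ι] {T : Set Ω} {B : ι → Set Ω} {r : ℝ}
    (hB : ∀ i, P.real (B i) ≤ r) (hT : ∀ ω, (∀ i, ω ∉ B i) → ω ∈ T) :
    1 - Fintype.card ι * r ≤ P.real T := by
  have hcover : Tᶜ ⊆ ⋃ i, B i := fun ω hω => by
    by_contra h
    exact hω (hT ω (by simpa using h))
  have h1 : 1 ≤ P.real T + P.real Tᶜ := by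
    simpa [Set.union_compl_self] using measureReal_union_le (μ := P) T Tᶜ
  have h2 : ∑ i, P.real (B i) ≤ Fintype.card ι * r := by
    simpa using sum_le_sum fun i (_ : i ∈ univ) => hB i
  linarith [(measureReal_mono (μ := P) hcover).trans (measureReal_iUnion_fintype_le B)]

theorem stmt_15_general (n : ℕ) (ε : ℝ) (hε0 : 0 < ε)
    (e : Fin n → ℝ) (hepos : ∀ i, 0 < e i) (hesum : ∑ i, e i = 1)
    (μ : Fin n → ℝ) (hμpos : ∀ i, 0 < μ i) :
    ∃ m' : ℕ, ∀ m : ℕ, m' ≤ m → n ≤ m →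
      ∀ (Ω : Type) (_ : MeasureSpace Ω) (_ : IsProbabilityMeasure (ℙ : Measure Ω))
        (X : Fin n → Fin m → Ω → ℝ),
        (∀ i j, Measurable (X i j)) →
        (∀ i, iIndepFun (fun j => X i j) ℙ) →
        (∀ i j j', Measure.map (X i j) ℙ = Measure.map (X i j') ℙ) →
        (∀ i j ω, X i j ω ∈ Set.Icc (0 : ℝ) 1) →
        (∀ i j, ∫ ω, X i j ω = μ i) →
        ∀ S : Fin n → Finset (Fin m),
          (∀ i, (S i).card = ⌊(m : ℝ) * e i⌋₊) →
          (Pairwise fun i i' => Disjoint (S i) (S i')) →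
          1 - 1 / (m : ℝ) ≤
            (ℙ {ω | ∀ i : Fin n,
              (1 - 3 * ε) * e i * (∑ j, X i j ω) ≤ (∑ j ∈ S i, X i j ω) ∧
              (1 - 3 * ε) * WMMS e (fun j => X i j ω) i ≤
                ∑ j ∈ S i, X i j ω}).toReal := by
  have hn : 0 < n := Fin.pos_iff_nonempty.2 (nonempty_of_sum_eq_one hesum)
  have hεe (i : Fin n) : 0 < ε * e i := mul_pos hε0 (hepos i)
  have hεμ (i : Fin n) : 0 < ε * μ i := mul_pos hε0 (hμpos i)
  have hev : ∀ᶠ m : ℕ in atTop, ∀ i, 1 ≤ ε * e i * m ∧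
      2 * n * m * Real.exp (-(2 * (ε * e i * μ i) ^ 2) * m) ≤ 1 ∧
      2 * n * m * Real.exp (-(2 * (ε * μ i) ^ 2) * m) ≤ 1 := eventually_all.2 fun i => by
    have := hepos i; have := hμpos i
    exact ((tendsto_natCast_atTop_atTop.const_mul_atTop (hεe i)).eventually_ge_atTop 1).and
      ((eventually_mul_natCast_mul_exp_neg_le_one _ (by positivity)).and
        (eventually_mul_natCast_mul_exp_neg_le_one _ (by positivity)))
  obtain ⟨m', hm'⟩ := eventually_atTop.1 hev
  refine ⟨m', fun m hm hnm Ω _ _ X hXmeas hXindep _ hXbd hXmean S hScard _ => ?_⟩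
  have hm0 : 0 < m := hn.trans_le hnm
  set bad : Fin n → Set Ω := fun i =>
    {ω | ε * e i * μ i * m ≤ ∑ j ∈ S i, (μ i - X i j ω)} ∪
      {ω | ε * μ i * m ≤ ∑ j, (X i j ω - μ i)}
  have hbad (i : Fin n) : volume.real (bad i) ≤ 1 / (n * m) := by
    obtain ⟨-, hlow, hup⟩ := hm' m hm i
    refine (measureReal_deviation_le hm0 (hXmeas i) (hXindep i) (hXbd i) (hXmean i) (S i)
      (mul_pos (hεe i) (hμpos i)).le (hεμ i).le).trans ?_
    rw [le_div_iff₀ (by positivity)]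
    linarith
  refine le_trans (le_of_eq ?_) (one_sub_card_mul_le_measureReal hbad fun ω hω i => ?_)
  · rw [Fintype.card_fin]; field_simp
  have hdev := hω i
  simp only [bad, Set.mem_union, Set.mem_ofPred_eq, not_or, not_le] at hdev
  have hv (j : Fin m) : 0 ≤ X i j ω := (hXbd i j ω).1
  have hshare := mul_sum_le_sum_of_deviation_lt hε0 (hepos i) (hμpos i) (hm' m hm i).1 hv
    (hScard i) hdev.1 hdev.2
  exact ⟨hshare, mul_WMMS_le_of_mul_sum_le hepos hesum hv (sum_nonneg fun j _ => hv j) hshare⟩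

/-- Stochastic agents: each agent `i`'s values for the `m` items are
i.i.d. draws from a distribution on `[0,1]` with mean `μ_i > 0`.  If each agent
`i` is given an arbitrary fixed set `S_i` of `t_i = ⌊m e_i⌋` items, then there
is `m'` (depending on the entitlements, the means and `ε`) such that for all
`m ≥ m'`, with probability at least `1 − 1/m`, every agent's bundle is worth at
least `(1−3ε)·e_i·V_i(M)`, and hence at least `(1−3ε)·WMMS_i`. -/
theorem stmt_15 (n : ℕ) (hn : 0 < n) (ε : ℝ) (hε0 : 0 < ε) (hε1 : ε < 1)
    (e : Fin n → ℝ) (hepos : ∀ i, 0 < e i) (hesum : ∑ i, e i = 1)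
    (μ : Fin n → ℝ) (hμpos : ∀ i, 0 < μ i) :
    ∃ m' : ℕ, ∀ m : ℕ, m' ≤ m → n ≤ m →
      ∀ (Ω : Type) (_ : MeasureSpace Ω) (_ : IsProbabilityMeasure (ℙ : Measure Ω))
        (X : Fin n → Fin m → Ω → ℝ),
        (∀ i j, Measurable (X i j)) →
        (∀ i, iIndepFun (fun j => X i j) ℙ) →
        (∀ i j j', Measure.map (X i j) ℙ = Measure.map (X i j') ℙ) →
        (∀ i j ω, X i j ω ∈ Set.Icc (0 : ℝ) 1) →
        (∀ i j, ∫ ω, X i j ω = μ i) →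
        ∀ S : Fin n → Finset (Fin m),
          (∀ i, (S i).card = ⌊(m : ℝ) * e i⌋₊) →
          (Pairwise fun i i' => Disjoint (S i) (S i')) →
          1 - 1 / (m : ℝ) ≤
            (ℙ {ω | ∀ i : Fin n,
              (1 - 3 * ε) * e i * (∑ j, X i j ω) ≤ (∑ j ∈ S i, X i j ω) ∧
              (1 - 3 * ε) * WMMS e (fun j => X i j ω) i ≤
                ∑ j ∈ S i, X i j ω}).toReal :=
  stmt_15_general n ε hε0 e hepos hesum μ hμpos
end

section
/- For the greedy round-robin allocation: the ℓ-th item assigned to agent i (when agents pick in cyclic order, each taking their favorite remaining item) has V_i-value at least V_i(b_{(ℓ−1)n + i}), where items are indexed in nonincreasing order of V_i-value. -/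
/-- In the greedy round-robin allocation (in round `t`, 0-based, agent
`⟨t % n⟩` removes his most valuable remaining item `g t`), if the items are
indexed in nonincreasing order of `V_i`-value, then the item agent `i` picks in
round `t` (his `ℓ`-th pick, at which point only `t` items have been removed)
is worth at least `V_i(b_t)` to him. -/
theorem stmt_18 (n m : ℕ) (hn : 0 < n) (hm : n ≤ m)
    (V : Fin n → Fin m → ℝ) (i : Fin n)
    (hsorted : ∀ j k : Fin m, j ≤ k → V i k ≤ V i j)
    (g : Fin m → Fin m) (hginj : Function.Injective g)
    (hgreedy : ∀ t b : Fin m, (∀ s : Fin m, s < t → g s ≠ b) →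
      V ⟨(t : ℕ) % n, Nat.mod_lt _ hn⟩ b ≤ V ⟨(t : ℕ) % n, Nat.mod_lt _ hn⟩ (g t)) :
    ∀ t : Fin m, (t : ℕ) % n = (i : ℕ) → V i t ≤ V i (g t) := by
  intro t ht
  have hpick : (⟨(t : ℕ) % n, Nat.mod_lt _ hn⟩ : Fin n) = i := Fin.ext ht
  have hcard : ((Finset.Iio t).image g).card < (Finset.Iic t).card := by
    have h1 : ((Finset.Iio t).image g).card ≤ (t : ℕ) :=
      le_trans Finset.card_image_le (by simp)
    have h2 : (Finset.Iic t).card = (t : ℕ) + 1 := by simp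
    omega
  obtain ⟨b, hbIic, hb⟩ : ∃ b ∈ Finset.Iic t, b ∉ (Finset.Iio t).image g := by
    by_contra h
    push_neg at h
    exact absurd (Finset.card_le_card h) (by omega)
  have hbt : b ≤ t := Finset.mem_Iic.mp hbIic
  have havail : ∀ s : Fin m, s < t → g s ≠ b := by
    intro s hs hgs
    exact hb (Finset.mem_image.mpr ⟨s, Finset.mem_Iio.mpr hs, hgs⟩)
  have := hgreedy t b havail
  rw [hpick] at this
  exact le_trans (hsorted b t hbt) this
end
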